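/- Let $p$ be a prime, $D \subseteq \mathbb{F}_p$ nonempty with $|D| = n$, and $\Phi(D) = \max_{\chi \neq \chi_0} |\sum_{a \in D} \chi(a)|$ over nontrivial additive characters. Then for any $b \in \mathbb{F}_p$ and $k \ge 1$, the number $N_{\mathrm{ord}}(k,b,D)$ of ordered tuples $(x_1,\dots,x_k) \in D^k$ with pairwise distinct coordinates summing to $b$ satisfies $\left| N_{\mathrm{ord}}(k,b,D) - p^{-1} (n)_k \right| \le \frac{p-1}{p} (\Phi(D) + k - 1)_k \le (\Phi(D)+k-1)_k$. -/

import Mathlib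

open scoped Classical

/-- The additive character `χ_a(x) = e^{2πi a x / p}` of `𝔽_p`. -/
noncomputable def ep (p : ℕ) (a x : ZMod p) : ℂ :=
  Complex.exp (2 * Real.pi * Complex.I * ((a.val : ℂ) * (x.val : ℂ)) / p)

namespace EpAux

open Finset

noncomputable def zet (p : ℕ) : ℂ := Complex.exp (2 * Real.pi * Complex.I / p)

lemma ep_eq (p : ℕ) (c x : ZMod p) : ep p c x = zet p ^ (c.val * x.val) := by
  rw [ep, zet, ← Complex.exp_nat_mul]
  congr 1
  push_cast
  ring

lemma zet_pow_eq_one_iff {p : ℕ} (hp : 0 < p) (m : ℕ) : zet p ^ m = 1 ↔ p ∣ m := by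
  rw [zet, ← Complex.exp_nat_mul, Complex.exp_eq_one_iff]
  have hp0 : (p : ℂ) ≠ 0 := Nat.cast_ne_zero.mpr hp.ne'
  have h2 : (2 * (Real.pi : ℂ) * Complex.I) ≠ 0 := by
    simp [Real.pi_ne_zero, Complex.I_ne_zero]
  constructor
  · rintro ⟨t, ht⟩
    have h : (m : ℂ) * (2 * Real.pi * Complex.I)
        = ((t * p : ℤ) : ℂ) * (2 * Real.pi * Complex.I) := by
      field_simp at ht
      push_cast
      linear_combination (2 * Real.pi * Complex.I) * ht
    have hm : (m : ℤ) = t * p := by exact_mod_cast mul_right_cancel₀ h2 h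
    have : (p : ℤ) ∣ (m : ℤ) := ⟨t, by linarith⟩
    exact_mod_cast this
  · rintro ⟨t, rfl⟩
    refine ⟨t, ?_⟩
    push_cast
    field_simp

lemma zet_pow_mod {p : ℕ} (hp : 0 < p) (m : ℕ) : zet p ^ m = zet p ^ (m % p) := by
  conv_lhs => rw [← Nat.div_add_mod m p]
  rw [pow_add, pow_mul, (zet_pow_eq_one_iff hp p).mpr dvd_rfl, one_pow, one_mul]

lemma zet_pow_congr {p : ℕ} (hp : 0 < p) {m m' : ℕ} (h : m % p = m' % p) :
    zet p ^ m = zet p ^ m' := by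
  rw [zet_pow_mod hp m, zet_pow_mod hp m', h]

lemma sum_zmod {p : ℕ} [NeZero p] (f : ℕ → ℂ) :
    ∑ c : ZMod p, f c.val = ∑ j ∈ range p, f j := by
  refine Finset.sum_nbij' (fun c => c.val) (fun j => (j : ZMod p)) ?_ ?_ ?_ ?_ ?_
  · intro c _; exact mem_range.mpr (ZMod.val_lt c)
  · intro j _; exact mem_univ _
  · intro c _; exact ZMod.natCast_rightInverse c
  · intro j hj; exact ZMod.val_cast_of_lt (mem_range.mp hj)
  · intro c _; rfl

variable {p : ℕ} [NeZero p]

lemma hp0 : 0 < p := Nat.pos_of_ne_zero (NeZero.ne p)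

lemma ep_add (c x y : ZMod p) : ep p c (x + y) = ep p c x * ep p c y := by
  rw [ep_eq, ep_eq, ep_eq, ← pow_add]
  refine zet_pow_congr hp0 ?_
  conv_lhs => rw [ZMod.val_add]
  rw [Nat.mul_mod, Nat.mod_mod_of_dvd _ dvd_rfl]
  rw [← Nat.mul_mod, Nat.mul_add, Nat.add_mod, ← Nat.add_mod]

omit [NeZero p] in
lemma ep_zero_right (c : ZMod p) : ep p c 0 = 1 := by
  rw [ep_eq, ZMod.val_zero, mul_zero, pow_zero]

omit [NeZero p] in
lemma ep_zero_left (x : ZMod p) : ep p 0 x = 1 := by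
  rw [ep_eq, ZMod.val_zero, zero_mul, pow_zero]

lemma ep_sum {ι : Type*} (c : ZMod p) (s : Finset ι) (g : ι → ZMod p) :
    ep p c (∑ i ∈ s, g i) = ∏ i ∈ s, ep p c (g i) := by
  classical
  induction s using Finset.cons_induction with
  | empty => simpa using ep_zero_right c
  | cons a s ha ih => rw [Finset.sum_cons, Finset.prod_cons, ep_add, ih]

lemma ep_pow (c a : ZMod p) (e : ℕ) : ep p c a ^ e = ep p (c * (e : ZMod p)) a := by
  rw [ep_eq, ep_eq, ← pow_mul]
  refine zet_pow_congr hp0 ?_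
  have h1 : (c * (e : ZMod p)).val % p = (c.val * e) % p := by
    rw [ZMod.val_mul, Nat.mod_mod_of_dvd _ dvd_rfl, Nat.mul_mod, ZMod.val_natCast,
      Nat.mod_mod_of_dvd _ dvd_rfl, ← Nat.mul_mod]
  calc c.val * a.val * e % p = (c.val * e) * a.val % p := by ring_nf
    _ = ((c * (e:ZMod p)).val) * a.val % p := by
        rw [Nat.mul_mod, ← h1, ← Nat.mul_mod]

omit [NeZero p] in
lemma norm_ep (c a : ZMod p) : ‖ep p c a‖ = 1 := by
  rw [ep_eq, norm_pow]
  have : (2 * (Real.pi:ℂ) * Complex.I / p) = ((2 * Real.pi / p : ℝ) : ℂ) * Complex.I := by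
    push_cast; ring
  rw [zet, this, Complex.norm_exp_ofReal_mul_I, one_pow]

lemma orth (s : ZMod p) :
    ∑ c : ZMod p, ep p c s = if s = 0 then (p : ℂ) else 0 := by
  have hp : 0 < p := hp0
  simp_rw [ep_eq]
  have hc : ∀ c : ZMod p, zet p ^ (c.val * s.val) = (zet p ^ s.val) ^ c.val := by
    intro c; rw [← pow_mul, mul_comm]
  simp_rw [hc]
  rw [sum_zmod (f := fun j => (zet p ^ s.val) ^ j)]
  by_cases hs : s = 0
  · simp [hs, ZMod.val_zero]
  · rw [if_neg hs]
    have hw : zet p ^ s.val ≠ 1 := by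
      intro h1
      have hdvd := (zet_pow_eq_one_iff hp _).mp h1
      have h1' : 0 < s.val := by
        rcases Nat.eq_zero_or_pos s.val with h | h
        · exact absurd ((ZMod.val_eq_zero s).mp h) hs
        · exact h
      exact absurd (Nat.le_of_dvd h1' hdvd) (not_le.mpr (ZMod.val_lt s))
    rw [geom_sum_eq hw]
    have hone : (zet p ^ s.val) ^ p = 1 := by
      rw [← pow_mul, zet_pow_eq_one_iff hp]
      exact dvd_mul_left p s.val
    rw [hone, sub_self, zero_div]

noncomputable def Ainj (p : ℕ) [NeZero p] (D : Finset (ZMod p)) (m : ℕ) :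
    Finset (Fin m → ZMod p) :=
  Finset.univ.filter (fun x => (∀ i, x i ∈ D) ∧ Function.Injective x)

lemma snoc_mem {m : ℕ} {D : Finset (ZMod p)} {y : Fin m → ZMod p} {a : ZMod p}
    (hy : y ∈ Ainj p D m) (ha : a ∈ D.filter (fun a => ∀ j, a ≠ y j)) :
    Fin.snoc y a ∈ Ainj p D (m + 1) := by
  simp only [Ainj, mem_filter, mem_univ, true_and] at hy ⊢
  simp only [mem_filter] at ha
  obtain ⟨hyD, hyinj⟩ := hy
  obtain ⟨haD, hane⟩ := ha
  constructor
  · intro i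
    refine Fin.lastCases ?_ ?_ i
    · rw [Fin.snoc_last]; exact haD
    · intro j; rw [Fin.snoc_castSucc]; exact hyD j
  · intro i₁ i₂ h
    rcases Fin.eq_castSucc_or_eq_last i₁ with ⟨j₁, rfl⟩ | rfl <;>
      rcases Fin.eq_castSucc_or_eq_last i₂ with ⟨j₂, rfl⟩ | rfl
    · rw [Fin.snoc_castSucc, Fin.snoc_castSucc] at h
      exact congrArg Fin.castSucc (hyinj h)
    · rw [Fin.snoc_castSucc, Fin.snoc_last] at h
      exact absurd h.symm (hane j₁)
    · rw [Fin.snoc_castSucc, Fin.snoc_last] at h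
      exact absurd h (hane j₂)
    · rfl

lemma init_mem {m : ℕ} {D : Finset (ZMod p)} {x : Fin (m+1) → ZMod p}
    (hx : x ∈ Ainj p D (m+1)) :
    Fin.init x ∈ Ainj p D m ∧
      x (Fin.last m) ∈ D.filter (fun a => ∀ j, a ≠ Fin.init x j) := by
  simp only [Ainj, mem_filter, mem_univ, true_and] at hx ⊢
  obtain ⟨hxD, hxinj⟩ := hx
  refine ⟨⟨fun i => hxD _, fun i₁ i₂ h => ?_⟩, hxD _, fun j h => ?_⟩
  · exact Fin.castSucc_injective m (hxinj h)
  · exact absurd (hxinj h) (Fin.ne_last_of_lt (Fin.castSucc_lt_last j)).symm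

lemma sum_snoc {M : Type*} [AddCommMonoid M] (D : Finset (ZMod p)) (m : ℕ)
    (g : (Fin (m+1) → ZMod p) → M) :
    ∑ x ∈ Ainj p D (m+1), g x =
      ∑ y ∈ Ainj p D m, ∑ a ∈ D.filter (fun a => ∀ j, a ≠ y j), g (Fin.snoc y a) := by
  rw [← Finset.sum_sigma (Ainj p D m) (fun y => D.filter (fun a => ∀ j, a ≠ y j))
    (fun z => g (Fin.snoc z.1 z.2))]
  refine Finset.sum_nbij' (fun x => ⟨Fin.init x, x (Fin.last m)⟩)
    (fun z => Fin.snoc z.1 z.2) ?_ ?_ ?_ ?_ ?_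
  · intro x hx
    obtain ⟨h1, h2⟩ := init_mem hx
    exact Finset.mem_sigma.mpr ⟨h1, h2⟩
  · intro z hz
    obtain ⟨h1, h2⟩ := Finset.mem_sigma.mp hz
    exact snoc_mem h1 h2
  · intro x _
    exact Fin.snoc_init_self x
  · intro z hz
    refine Sigma.ext ?_ ?_
    · simp
    · simp
  · intro x _
    rw [Fin.snoc_init_self]

lemma filter_eq_sdiff {m : ℕ} {D : Finset (ZMod p)} {y : Fin m → ZMod p} :
    D.filter (fun a => ∀ j, a ≠ y j) = D \ Finset.image y Finset.univ := by
  ext a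
  simp only [mem_filter, mem_sdiff, Finset.mem_image, mem_univ, true_and]
  constructor
  · rintro ⟨haD, h⟩
    exact ⟨haD, fun ⟨j, hj⟩ => h j hj.symm⟩
  · rintro ⟨haD, h⟩
    exact ⟨haD, fun j hj => h ⟨j, hj.symm⟩⟩

lemma image_subset {m : ℕ} {D : Finset (ZMod p)} {y : Fin m → ZMod p}
    (hy : y ∈ Ainj p D m) : Finset.image y Finset.univ ⊆ D := by
  simp only [Ainj, mem_filter, mem_univ, true_and] at hy
  intro a ha
  obtain ⟨j, _, rfl⟩ := Finset.mem_image.mp ha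
  exact hy.1 j

lemma card_filter_compl {m : ℕ} {D : Finset (ZMod p)} {y : Fin m → ZMod p}
    (hy : y ∈ Ainj p D m) :
    (D.filter (fun a => ∀ j, a ≠ y j)).card = D.card - m := by
  rw [filter_eq_sdiff]
  have hinj : Function.Injective y := by
    simp only [Ainj, mem_filter, mem_univ, true_and] at hy
    exact hy.2
  rw [Finset.card_sdiff_of_subset (image_subset hy),
    Finset.card_image_of_injective _ hinj, Finset.card_univ, Fintype.card_fin]

lemma Ainj_zero (D : Finset (ZMod p)) : Ainj p D 0 = Finset.univ := by
  ext x
  simp only [Ainj, mem_filter, mem_univ, true_and, iff_true]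
  exact ⟨fun i => i.elim0, fun i => i.elim0⟩

lemma card_Ainj (D : Finset (ZMod p)) (m : ℕ) :
    (Ainj p D m).card = ∏ i ∈ range m, (D.card - i) := by
  induction m with
  | zero =>
    rw [range_zero, prod_empty, Ainj_zero, card_univ]
    exact Fintype.card_unique
  | succ m ih =>
    have hss := sum_snoc (M := ℕ) D m (fun _ => 1)
    simp only [Finset.sum_const, smul_eq_mul, mul_one] at hss
    rw [hss,
      Finset.sum_congr rfl (fun y hy => card_filter_compl hy), Finset.sum_const, smul_eq_mul,
      prod_range_succ, ← ih]

lemma key_bound (hpp : p.Prime) (D : Finset (ZMod p)) {k : ℕ} (hkp : k < p)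
    {Φ : ℝ} (hΦ0 : 0 ≤ Φ)
    (hΦge : ∀ d : ZMod p, d ≠ 0 → ‖∑ a ∈ D, ep p d a‖ ≤ Φ)
    {c : ZMod p} (hc : c ≠ 0) :
    ∀ (m : ℕ) (e : Fin m → ℕ), (∀ i, 1 ≤ e i) → (∑ i, e i ≤ k) →
      ‖∑ x ∈ Ainj p D m, ∏ i, ep p c (x i) ^ e i‖ ≤ ∏ j ∈ range m, (Φ + j) := by
  intro m
  induction m with
  | zero =>
    intro e _ _
    rw [Ainj_zero]
    simp
  | succ m ih =>
    intro e he hsum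
    set e' : Fin m → ℕ := fun j => e j.castSucc with he'
    set E : ℕ := e (Fin.last m) with hE
    set P : ℂ := ∑ a ∈ D, ep p c a ^ E with hP
    set B : (Fin m → ℕ) → ℂ :=
      fun f => ∑ y ∈ Ainj p D m, ∏ i, ep p c (y i) ^ f i with hB
    set C : ℝ := ∏ j ∈ range m, (Φ + j) with hC
    have hsum' : ∑ j, e' j + E ≤ k := by
      rw [he', hE, ← Fin.sum_univ_castSucc]
      exact hsum
    have hstep : ∑ x ∈ Ainj p D (m+1), ∏ i, ep p c (x i) ^ e i
        = P * B e' - ∑ j : Fin m, B (Function.update e' j (e' j + E)) := by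
      rw [sum_snoc]
      have h1 : ∀ y ∈ Ainj p D m,
          (∑ a ∈ D.filter (fun a => ∀ j, a ≠ y j),
            ∏ i, ep p c ((Fin.snoc y a : Fin (m+1) → ZMod p) i) ^ e i)
          = (∏ j, ep p c (y j) ^ e' j) * (P - ∑ j, ep p c (y j) ^ E) := by
        intro y hy
        have h2 : ∀ a : ZMod p,
            (∏ i, ep p c ((Fin.snoc y a : Fin (m+1) → ZMod p) i) ^ e i)
            = (∏ j, ep p c (y j) ^ e' j) * ep p c a ^ E := by
          intro a
          rw [Fin.prod_univ_castSucc]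
          simp only [Fin.snoc_castSucc, Fin.snoc_last, he', hE]
        have h3 : ∑ a ∈ D.filter (fun a => ∀ j, a ≠ y j), ep p c a ^ E
            = P - ∑ j, ep p c (y j) ^ E := by
          rw [filter_eq_sdiff, Finset.sum_sdiff_eq_sub (image_subset hy), hP]
          congr 1
          have hinj : Function.Injective y := by
            simp only [Ainj, mem_filter, mem_univ, true_and] at hy
            exact hy.2
          rw [Finset.sum_image (fun i _ j _ h => hinj h)]
        rw [Finset.sum_congr rfl (fun a _ => h2 a), ← Finset.mul_sum, h3]
      rw [Finset.sum_congr rfl h1]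
      have h4 : ∀ (j : Fin m) (y : Fin m → ZMod p),
          (∏ i, ep p c (y i) ^ e' i) * ep p c (y j) ^ E
          = ∏ i, ep p c (y i) ^ (Function.update e' j (e' j + E) i) := by
        intro j y
        have hfun : (fun i => ep p c (y i) ^ (Function.update e' j (e' j + E) i))
            = Function.update (fun i => ep p c (y i) ^ e' i) j
                (ep p c (y j) ^ (e' j + E)) := by
          funext i
          by_cases hij : i = j
          · subst hij; simp
          · simp [Function.update_of_ne hij]
        calc (∏ i, ep p c (y i) ^ e' i) * ep p c (y j) ^ E
            = (ep p c (y j) ^ e' j *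
                ∏ i ∈ Finset.univ.erase j, ep p c (y i) ^ e' i) * ep p c (y j) ^ E := by
              rw [Finset.mul_prod_erase Finset.univ
                (fun i => ep p c (y i) ^ e' i) (mem_univ j)]
          _ = ep p c (y j) ^ (e' j + E) *
                ∏ i ∈ Finset.univ.erase j, ep p c (y i) ^ e' i := by
              rw [pow_add]; ring
          _ = ∏ i, ep p c (y i) ^ (Function.update e' j (e' j + E) i) := by
              rw [hfun, Finset.prod_update_of_mem (mem_univ j),
                Finset.sdiff_singleton_eq_erase]
      calc ∑ y ∈ Ainj p D m,
            (∏ j, ep p c (y j) ^ e' j) * (P - ∑ j, ep p c (y j) ^ E)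
          = ∑ y ∈ Ainj p D m,
            ((∏ j, ep p c (y j) ^ e' j) * P -
              ∑ j, (∏ i, ep p c (y i) ^ e' i) * ep p c (y j) ^ E) := by
            apply Finset.sum_congr rfl
            intro y _
            rw [mul_sub]
            congr 1
            exact Finset.mul_sum _ _ _
        _ = P * B e' - ∑ y ∈ Ainj p D m, ∑ j : Fin m,
              (∏ i, ep p c (y i) ^ e' i) * ep p c (y j) ^ E := by
            rw [Finset.sum_sub_distrib, ← Finset.sum_mul, hB, mul_comm]
        _ = P * B e' - ∑ j : Fin m, B (Function.update e' j (e' j + E)) := by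
            rw [Finset.sum_comm]
            congr 1
            apply Finset.sum_congr rfl
            intro j _
            rw [hB]
            exact Finset.sum_congr rfl (fun y _ => h4 j y)
    have hC0 : (0:ℝ) ≤ C := by
      refine Finset.prod_nonneg fun j _ => by positivity
    have hEpos : 1 ≤ E := he _
    have hEk : E ≤ k :=
      le_trans (Finset.single_le_sum (fun i _ => Nat.zero_le (e i))
        (Finset.mem_univ (Fin.last m))) hsum
    have hEne : ((E : ZMod p)) ≠ 0 := by
      rw [Ne, ZMod.natCast_eq_zero_iff]
      intro hdvd
      have := Nat.le_of_dvd (by omega) hdvd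
      omega
    haveI : Fact p.Prime := ⟨hpp⟩
    have hPle : ‖P‖ ≤ Φ := by
      rw [hP, Finset.sum_congr rfl (fun a _ => ep_pow c a E)]
      exact hΦge _ (mul_ne_zero hc hEne)
    have hBe' : ‖B e'‖ ≤ C := by
      refine ih e' (fun i => he _) ?_
      omega
    have hBupd : ∀ j : Fin m, ‖B (Function.update e' j (e' j + E))‖ ≤ C := by
      intro j
      refine ih _ ?_ ?_
      · intro i
        by_cases hij : i = j
        · subst hij; simp; omega
        · simpa [Function.update_of_ne hij] using he i.castSucc
      · have h5 : ∑ i, Function.update e' j (e' j + E) i = ∑ i, e' i + E := by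
          rw [Finset.sum_update_of_mem (mem_univ j), Finset.sdiff_singleton_eq_erase]
          have h6 := Finset.add_sum_erase Finset.univ e' (mem_univ j)
          omega
        omega
    rw [hstep, prod_range_succ, ← hC]
    calc ‖P * B e' - ∑ j : Fin m, B (Function.update e' j (e' j + E))‖
        ≤ ‖P * B e'‖ + ‖∑ j : Fin m, B (Function.update e' j (e' j + E))‖ :=
          norm_sub_le _ _
      _ ≤ ‖P‖ * ‖B e'‖ + ∑ j : Fin m, ‖B (Function.update e' j (e' j + E))‖ := by
          rw [norm_mul]
          exact add_le_add le_rfl (norm_sum_le _ _)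
      _ ≤ Φ * C + ∑ j : Fin m, C := by
          refine add_le_add (mul_le_mul hPle hBe' (norm_nonneg _) hΦ0) ?_
          exact Finset.sum_le_sum fun j _ => hBupd j
      _ = Φ * C + m * C := by
          rw [Finset.sum_const, Finset.card_univ, Fintype.card_fin, nsmul_eq_mul]
      _ = C * (Φ + m) := by ring

end EpAux

open EpAux Finset

/-- With `Φ(D) = max_{χ≠χ₀} |∑_{a∈D} χ(a)|`, the number of ordered tuples in
`D^k` with pairwise distinct coordinates summing to `b` satisfies
`|N_ord - p⁻¹(n)_k| ≤ ((p-1)/p) (Φ(D)+k-1)_k ≤ (Φ(D)+k-1)_k`. -/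
theorem ordered_count_bound (p : ℕ) [Fact p.Prime]
    (D : Finset (ZMod p)) (hD : D.Nonempty) (n : ℕ) (hn : D.card = n)
    (b : ZMod p) (k : ℕ) (hk : 1 ≤ k) (hkp : k < p) (Φ : ℝ)
    (hΦ : Φ = sSup {r : ℝ | ∃ c : ZMod p, c ≠ 0 ∧ r = ‖∑ a ∈ D, ep p c a‖}) :
    |((Finset.univ.filter
          (fun x : Fin k → ZMod p =>
            (∀ i, x i ∈ D) ∧ (∀ i j, i ≠ j → x i ≠ x j) ∧ ∑ i, x i = b)).card : ℝ) -
        (p : ℝ)⁻¹ * ∏ i ∈ Finset.range k, ((n : ℝ) - i)| ≤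
      ((p : ℝ) - 1) / p * ∏ i ∈ Finset.range k, (Φ + k - 1 - i) ∧
    ((p : ℝ) - 1) / p * ∏ i ∈ Finset.range k, (Φ + k - 1 - i) ≤
      ∏ i ∈ Finset.range k, (Φ + k - 1 - i) := by
  have hprime : p.Prime := Fact.out
  haveI : NeZero p := ⟨hprime.pos.ne'⟩
  have hp1 : 1 < p := hprime.one_lt
  have hpR : (0:ℝ) < p := by exact_mod_cast hprime.pos
  have hpC : (p : ℂ) ≠ 0 := Nat.cast_ne_zero.mpr hprime.pos.ne'
  -- facts about Φ
  have hbdd : BddAbove {r : ℝ | ∃ c : ZMod p, c ≠ 0 ∧ r = ‖∑ a ∈ D, ep p c a‖} := by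
    refine Set.Finite.bddAbove (Set.Finite.subset
      (Set.Finite.image (fun c : ZMod p => ‖∑ a ∈ D, ep p c a‖) Set.finite_univ) ?_)
    rintro r ⟨c, _, rfl⟩
    exact ⟨c, Set.mem_univ c, rfl⟩
  have hΦge : ∀ c : ZMod p, c ≠ 0 → ‖∑ a ∈ D, ep p c a‖ ≤ Φ := by
    intro c hc
    rw [hΦ]
    exact le_csSup hbdd ⟨c, hc, rfl⟩
  have hΦ0 : (0:ℝ) ≤ Φ :=
    le_trans (norm_nonneg _) (hΦge 1 one_ne_zero)
  set C : ℝ := ∏ j ∈ range k, (Φ + j) with hCdef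
  have hC0 : (0:ℝ) ≤ C := Finset.prod_nonneg fun j _ => by positivity
  -- reflection of the product
  have hrefl : ∏ i ∈ Finset.range k, (Φ + k - 1 - i) = C := by
    rw [hCdef, ← Finset.prod_range_reflect (fun j => Φ + (j:ℝ)) k]
    refine Finset.prod_congr rfl ?_
    intro i hi
    have hik : i < k := mem_range.mp hi
    have h1 : ((k - 1 - i : ℕ) : ℝ) = (k:ℝ) - 1 - i := by
      have h2 : 1 + i ≤ k := by omega
      rw [Nat.sub_sub, Nat.cast_sub h2]
      push_cast
      ring
    rw [h1]
    ring
  -- the counting set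
  have hNset : (Finset.univ.filter
        (fun x : Fin k → ZMod p =>
          (∀ i, x i ∈ D) ∧ (∀ i j, i ≠ j → x i ≠ x j) ∧ ∑ i, x i = b))
      = (Ainj p D k).filter (fun x => ∑ i, x i = b) := by
    ext x
    simp only [Ainj, Finset.filter_filter, mem_filter, mem_univ, true_and]
    constructor
    · rintro ⟨h1, h2, h3⟩
      exact ⟨⟨h1, fun i j h => by_contra fun hne => h2 i j hne h⟩, h3⟩
    · rintro ⟨⟨h1, h2⟩, h3⟩
      exact ⟨h1, fun i j hij heq => hij (h2 heq), h3⟩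
  set N : ℕ := ((Ainj p D k).filter (fun x => ∑ i, x i = b)).card with hNdef
  -- cardinality of Ainj as a real product
  have hcard : ((Ainj p D k).card : ℝ) = ∏ i ∈ Finset.range k, ((n : ℝ) - i) := by
    rw [card_Ainj, hn]
    by_cases hnk : k ≤ n
    · rw [Nat.cast_prod]
      refine Finset.prod_congr rfl ?_
      intro i hi
      have : i ≤ n := le_trans (le_of_lt (mem_range.mp hi)) hnk
      rw [Nat.cast_sub this]
    · have hnk' : n < k := not_le.mp hnk
      rw [Finset.prod_eq_zero (mem_range.mpr hnk') (Nat.sub_self n),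
        Finset.prod_eq_zero (mem_range.mpr hnk') (sub_self (n:ℝ))]
      simp
  -- the character sums
  set T : ZMod p → ℂ := fun c => ∑ x ∈ Ainj p D k, ∏ i, ep p c (x i) with hTdef
  have hT0 : T 0 = ((Ainj p D k).card : ℂ) := by
    rw [hTdef]
    simp only [ep_zero_left]
    simp
  have hTle : ∀ c : ZMod p, c ≠ 0 → ‖T c‖ ≤ C := by
    intro c hc
    have := key_bound hprime D hkp hΦ0 hΦge hc k (fun _ => 1) (fun i => le_refl 1)
      (by simp)
    simpa [hTdef] using this
  -- main identity
  have hmain : ((N : ℂ)) = (p:ℂ)⁻¹ * (((Ainj p D k).card : ℂ)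
      + ∑ c ∈ Finset.univ.erase (0 : ZMod p), T c * ep p c (-b)) := by
    have h1 : (N : ℂ) = ∑ x ∈ Ainj p D k, (if ∑ i, x i = b then (1:ℂ) else 0) := by
      rw [hNdef, Finset.card_filter]
      push_cast
      rfl
    have h2 : ∀ x : Fin k → ZMod p,
        (if ∑ i, x i = b then (1:ℂ) else 0)
          = (p:ℂ)⁻¹ * ∑ c : ZMod p, ep p c (∑ i, x i - b) := by
      intro x
      rw [orth]
      by_cases h : ∑ i, x i = b
      · rw [if_pos h, if_pos (by rw [h, sub_self]), inv_mul_cancel₀ hpC]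
      · rw [if_neg h, if_neg (sub_ne_zero.mpr h), mul_zero]
    have h3 : ∀ (c : ZMod p) (x : Fin k → ZMod p),
        ep p c (∑ i, x i - b) = (∏ i, ep p c (x i)) * ep p c (-b) := by
      intro c x
      rw [sub_eq_add_neg, ep_add, ep_sum]
    calc (N : ℂ) = ∑ x ∈ Ainj p D k, (p:ℂ)⁻¹ * ∑ c : ZMod p, ep p c (∑ i, x i - b) := by
          rw [h1, Finset.sum_congr rfl (fun x _ => h2 x)]
      _ = (p:ℂ)⁻¹ * ∑ c : ZMod p, ∑ x ∈ Ainj p D k, ep p c (∑ i, x i - b) := by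
          rw [← Finset.mul_sum, Finset.sum_comm]
      _ = (p:ℂ)⁻¹ * ∑ c : ZMod p, T c * ep p c (-b) := by
          congr 1
          refine Finset.sum_congr rfl ?_
          intro c _
          rw [Finset.sum_congr rfl (fun x _ => h3 c x), ← Finset.sum_mul, hTdef]
      _ = (p:ℂ)⁻¹ * (((Ainj p D k).card : ℂ)
            + ∑ c ∈ Finset.univ.erase (0 : ZMod p), T c * ep p c (-b)) := by
          rw [← Finset.add_sum_erase Finset.univ (fun c => T c * ep p c (-b))
            (mem_univ (0 : ZMod p))]
          rw [hT0, ep_zero_left, mul_one]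
  -- pass to real absolute values
  have hreal : |((N:ℝ) - (p:ℝ)⁻¹ * ∏ i ∈ Finset.range k, ((n : ℝ) - i))|
      ≤ ((p:ℝ) - 1) / p * C := by
    have hz : (((N:ℝ) - (p:ℝ)⁻¹ * ∏ i ∈ Finset.range k, ((n : ℝ) - i) : ℝ) : ℂ)
        = (p:ℂ)⁻¹ * ∑ c ∈ Finset.univ.erase (0 : ZMod p), T c * ep p c (-b) := by
      rw [← hcard]
      push_cast
      rw [hmain]
      ring
    have habs : |((N:ℝ) - (p:ℝ)⁻¹ * ∏ i ∈ Finset.range k, ((n : ℝ) - i))|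
        = ‖(((N:ℝ) - (p:ℝ)⁻¹ * ∏ i ∈ Finset.range k, ((n : ℝ) - i) : ℝ) : ℂ)‖ := by
      rw [Complex.norm_real, Real.norm_eq_abs]
    rw [habs, hz, norm_mul, norm_inv, Complex.norm_natCast]
    have hbound : ‖∑ c ∈ Finset.univ.erase (0 : ZMod p), T c * ep p c (-b)‖
        ≤ ((p:ℝ) - 1) * C := by
      refine le_trans (norm_sum_le _ _) ?_
      have hterm : ∀ c ∈ Finset.univ.erase (0 : ZMod p), ‖T c * ep p c (-b)‖ ≤ C := by
        intro c hc
        rw [norm_mul, norm_ep, mul_one]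
        exact hTle c (Finset.ne_of_mem_erase hc)
      refine le_trans (Finset.sum_le_sum hterm) ?_
      rw [Finset.sum_const, nsmul_eq_mul, Finset.card_erase_of_mem (mem_univ _),
        Finset.card_univ, ZMod.card]
      have : ((p - 1 : ℕ) : ℝ) = (p:ℝ) - 1 := by
        rw [Nat.cast_sub hprime.one_lt.le]
        simp
      rw [this]
    calc (p:ℝ)⁻¹ * ‖∑ c ∈ Finset.univ.erase (0 : ZMod p), T c * ep p c (-b)‖
        ≤ (p:ℝ)⁻¹ * (((p:ℝ) - 1) * C) := by
          refine mul_le_mul_of_nonneg_left hbound ?_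
          positivity
      _ = ((p:ℝ) - 1) / p * C := by
          field_simp
  constructor
  · rw [hNset, hrefl]
    exact hreal
  · rw [hrefl]
    have h1 : ((p:ℝ) - 1) / p ≤ 1 := by
      rw [div_le_one hpR]
      linarith
    calc ((p:ℝ) - 1) / p * C ≤ 1 * C :=
        mul_le_mul_of_nonneg_right h1 hC0
      _ = C := one_mul C
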